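/- Fix an integer p ≥ 3, a constant C > 0 and 0 < β < 1, and define ξ₀(r) = r²/2 + (C r)^p/p and F_RS(q,β) = E[log cosh(β·√(ξ₀'(q))·Z)] + (β²/2)·(ξ₀(1) − ξ₀(q) − (1−q)·ξ₀'(q)) for q ∈ [0,1], where Z is a standard Gaussian random variable. Then there exist ε ∈ (0,1) and c > 0 such that F_RS(q,β) ≥ F_RS(0,β) + c·q² for all q ∈ [0,ε]. -/

import Mathlib

open Real MeasureTheory ProbabilityTheory

open scoped NNReal

/-!
The elementary inequality `log cosh t ≥ t²/2 - t⁴/12`, integrated against the Gaussian moments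
`E Z² = 1`, `E Z⁴ = 3` (read off the mgf `exp (t²/2)`), gives `E log cosh (a Z) ≥ a²/2 - a⁴/4`.
With `s = ξ₀'(q)` this yields
`F(q) - F(0) ≥ (β²/2)(q s - ξ₀(q)) - β⁴ s²/4 ≥ β² q²/4 - β⁴ s²/4`.
Since `p ≥ 3`, `s = q + O(q²)`, so for small `q` we have `β s ≤ ((1 + β)/2) q`, and the right-hand
side is at least `(β²/4)(1 - ((1 + β)/2)²) q²`, which is positive because `β < 1`.
-/

lemma integral_pow_gaussianReal_zero (v : ℝ≥0) (n : ℕ) :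
    ∫ x, x ^ n ∂gaussianReal 0 v = iteratedDeriv n (fun t => exp (v * t ^ 2 / 2)) 0 := by
  have h := iteratedDeriv_mgf_zero (X := fun x : ℝ => x) (μ := gaussianReal 0 v) (by simp) n
  rw [mgf_fun_id_gaussianReal] at h
  simpa using h.symm

lemma deriv_mul_exp_mul_sq_div_two (v : ℝ) {P P' : ℝ → ℝ} (hP : ∀ t, HasDerivAt P (P' t) t) :
    deriv (fun t => P t * exp (v * t ^ 2 / 2))
      = fun t => (P' t + v * t * P t) * exp (v * t ^ 2 / 2) := by
  funext t
  have hE : HasDerivAt (fun t => exp (v * t ^ 2 / 2)) (exp (v * t ^ 2 / 2) * (v * t)) t := by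
    convert (((hasDerivAt_pow 2 t).const_mul v).div_const 2).exp using 1; push_cast; ring
  exact ((hP t).mul hE).deriv.trans (by ring)

lemma iteratedDeriv_exp_mul_sq_div_two (v : ℝ) :
    iteratedDeriv 2 (fun t => exp (v * t ^ 2 / 2)) 0 = v ∧
    iteratedDeriv 4 (fun t => exp (v * t ^ 2 / 2)) 0 = 3 * v ^ 2 := by
  have d0 : deriv (fun t => exp (v * t ^ 2 / 2)) = fun t => v * t * exp (v * t ^ 2 / 2) := by
    simpa using deriv_mul_exp_mul_sq_div_two v (fun t => hasDerivAt_const t (1 : ℝ))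
  have d1 : deriv (fun t => v * t * exp (v * t ^ 2 / 2))
      = fun t => (v + v ^ 2 * t ^ 2) * exp (v * t ^ 2 / 2) := by
    rw [deriv_mul_exp_mul_sq_div_two v fun t => (hasDerivAt_id' t).const_mul v]
    ring_nf
  have d2 : deriv (fun t => (v + v ^ 2 * t ^ 2) * exp (v * t ^ 2 / 2))
      = fun t => (3 * v ^ 2 * t + v ^ 3 * t ^ 3) * exp (v * t ^ 2 / 2) := by
    rw [deriv_mul_exp_mul_sq_div_two v fun t =>
      ((hasDerivAt_pow 2 t).const_mul (v ^ 2)).const_add v]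
    ring_nf
  have d3 : deriv (fun t => (3 * v ^ 2 * t + v ^ 3 * t ^ 3) * exp (v * t ^ 2 / 2))
      = fun t => (3 * v ^ 2 + 6 * v ^ 3 * t ^ 2 + v ^ 4 * t ^ 4) * exp (v * t ^ 2 / 2) := by
    rw [deriv_mul_exp_mul_sq_div_two v fun t =>
      ((hasDerivAt_id' t).const_mul (3 * v ^ 2)).fun_add ((hasDerivAt_pow 3 t).const_mul (v ^ 3))]
    ring_nf
  constructor
  · rw [iteratedDeriv_succ', iteratedDeriv_succ', iteratedDeriv_zero, d0, d1]; simp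
  · rw [iteratedDeriv_succ', iteratedDeriv_succ', iteratedDeriv_succ', iteratedDeriv_succ',
      iteratedDeriv_zero, d0, d1, d2, d3]; simp

lemma integral_sq_gaussianReal_zero (v : ℝ≥0) : ∫ x, x ^ 2 ∂gaussianReal 0 v = v := by
  rw [integral_pow_gaussianReal_zero, (iteratedDeriv_exp_mul_sq_div_two v).1]

lemma integral_pow_four_gaussianReal_zero (v : ℝ≥0) :
    ∫ x, x ^ 4 ∂gaussianReal 0 v = 3 * (v : ℝ) ^ 2 := by
  rw [integral_pow_gaussianReal_zero, (iteratedDeriv_exp_mul_sq_div_two v).2]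

lemma integrable_pow_gaussianReal (μ : ℝ) (v : ℝ≥0) (n : ℕ) :
    Integrable (fun x => x ^ n) (gaussianReal μ v) :=
  integrable_pow_of_mem_interior_integrableExpSet (X := fun x => x) (by simp) n

lemma nonneg_of_hasDerivAt_of_nonneg {f f' : ℝ → ℝ} (hf : ∀ x, HasDerivAt f (f' x) x)
    (h0 : f 0 = 0) (hf' : ∀ x, 0 ≤ x → 0 ≤ f' x) {t : ℝ} (ht : 0 ≤ t) : 0 ≤ f t := by
  have hmono : MonotoneOn f (Set.Ici 0) :=
    monotoneOn_of_hasDerivWithinAt_nonneg (convex_Ici 0)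
      (fun x _ => (hf x).continuousAt.continuousWithinAt) (fun x _ => (hf x).hasDerivWithinAt)
      (fun x hx => hf' x (interior_subset hx))
  simpa [h0] using hmono Set.self_mem_Ici ht ht

lemma sinh_le_mul_cosh {t : ℝ} (ht : 0 ≤ t) : sinh t ≤ t * cosh t := by
  have h := nonneg_of_hasDerivAt_of_nonneg (f := fun s => s * cosh s - sinh s)
    (fun s => ((hasDerivAt_id' s).mul (hasDerivAt_cosh s)).sub (hasDerivAt_sinh s))
    (by simp) (fun s hs => by nlinarith [sinh_nonneg_iff.mpr hs]) ht
  simpa using h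

lemma sub_cube_div_three_mul_cosh_le_sinh {t : ℝ} (ht : 0 ≤ t) :
    (t - t ^ 3 / 3) * cosh t ≤ sinh t := by
  have h := nonneg_of_hasDerivAt_of_nonneg (f := fun s => sinh s - (s - s ^ 3 / 3) * cosh s)
    (fun s => (hasDerivAt_sinh s).sub
      (((hasDerivAt_id' s).fun_sub ((hasDerivAt_pow 3 s).div_const 3)).mul (hasDerivAt_cosh s)))
    (by simp) (fun s hs => by
      have hsinh := sinh_le_mul_cosh hs
      have hsinh0 := sinh_nonneg_iff.mpr hs
      push_cast
      nlinarith [mul_le_mul_of_nonneg_left hsinh hs, pow_nonneg hs 3]) ht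
  simpa using h

lemma sq_div_two_sub_le_log_cosh (t : ℝ) : t ^ 2 / 2 - t ^ 4 / 12 ≤ log (cosh t) := by
  wlog ht : 0 ≤ t generalizing t
  · simpa [show (-t) ^ 4 = t ^ 4 by ring] using this (-t) (by linarith)
  have h := nonneg_of_hasDerivAt_of_nonneg
    (f := fun s => log (cosh s) - (s ^ 2 / 2 - s ^ 4 / 12))
    (fun s => ((hasDerivAt_cosh s).log (cosh_pos s).ne').sub
      (((hasDerivAt_pow 2 s).div_const 2).sub ((hasDerivAt_pow 4 s).div_const 12)))
    (by simp) (fun s hs => by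
      have htanh := sub_cube_div_three_mul_cosh_le_sinh hs
      rw [sub_nonneg, le_div_iff₀ (cosh_pos s)]
      push_cast
      linarith) ht
  simpa using h

lemma abs_log_cosh_le (t : ℝ) : |log (cosh t)| ≤ t ^ 2 / 2 := by
  rw [abs_of_nonneg (log_nonneg (one_le_cosh t)), ← log_exp (t ^ 2 / 2)]
  exact log_le_log (cosh_pos t) (cosh_le_exp_half_sq t)

lemma sq_div_two_sub_le_integral_log_cosh (a : ℝ) :
    a ^ 2 / 2 - a ^ 4 / 4 ≤ ∫ x, log (cosh (a * x)) ∂gaussianReal 0 1 := by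
  have h2 := integrable_pow_gaussianReal 0 1 2
  have h4 := integrable_pow_gaussianReal 0 1 4
  have hlog : Integrable (fun x => log (cosh (a * x))) (gaussianReal 0 1) :=
    (h2.const_mul (a ^ 2 / 2)).mono' (by fun_prop : Measurable _).aestronglyMeasurable
      (ae_of_all _ fun x => (abs_log_cosh_le (a * x)).trans_eq (by ring))
  calc a ^ 2 / 2 - a ^ 4 / 4
      = ∫ x, (a ^ 2 / 2 * x ^ 2 - a ^ 4 / 12 * x ^ 4) ∂gaussianReal 0 1 := by
        rw [integral_sub (h2.const_mul _) (h4.const_mul _), integral_const_mul, integral_const_mul,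
          integral_sq_gaussianReal_zero, integral_pow_four_gaussianReal_zero]
        push_cast; ring
    _ ≤ ∫ x, log (cosh (a * x)) ∂gaussianReal 0 1 :=
        integral_mono ((h2.const_mul _).sub (h4.const_mul _)) hlog fun x =>
          (sq_div_two_sub_le_log_cosh (a * x)).trans_eq' (by ring)

noncomputable def rsFunctional (ξ : ℝ → ℝ) (β q : ℝ) : ℝ :=
  (∫ x, log (cosh (β * sqrt (deriv ξ q) * x)) ∂gaussianReal 0 1)
    + β ^ 2 / 2 * (ξ 1 - ξ q - (1 - q) * deriv ξ q)

lemma rsFunctional_sub_rsFunctional_zero_ge {ξ : ℝ → ℝ} (β : ℝ) {q : ℝ} (hξ0 : ξ 0 = 0)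
    (hξ'0 : deriv ξ 0 = 0) (hξ'q : 0 ≤ deriv ξ q) :
    β ^ 2 / 2 * (q * deriv ξ q - ξ q) - β ^ 4 * deriv ξ q ^ 2 / 4
      ≤ rsFunctional ξ β q - rsFunctional ξ β 0 := by
  have hint := sq_div_two_sub_le_integral_log_cosh (β * sqrt (deriv ξ q))
  have ha2 : (β * sqrt (deriv ξ q)) ^ 2 = β ^ 2 * deriv ξ q := by rw [mul_pow, sq_sqrt hξ'q]
  rw [show (β * sqrt (deriv ξ q)) ^ 4 = ((β * sqrt (deriv ξ q)) ^ 2) ^ 2 by ring, ha2] at hint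
  simp only [rsFunctional, hξ0, hξ'0, sqrt_zero, mul_zero, zero_mul, cosh_zero, log_one,
    integral_zero]
  linarith

noncomputable def mixture (C : ℝ) (p : ℕ) (r : ℝ) : ℝ := r ^ 2 / 2 + (C * r) ^ p / p

section Mixture

variable {C : ℝ} {p : ℕ}

lemma hasDerivAt_mixture (hp : p ≠ 0) (r : ℝ) :
    HasDerivAt (mixture C p) (r + C ^ p * r ^ (p - 1)) r := by
  have h : HasDerivAt (fun r : ℝ => r ^ 2 / 2 + (C * r) ^ p / p)
      (2 * r ^ 1 / 2 + p * (C * r) ^ (p - 1) * C / p) r := by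
    simpa using ((hasDerivAt_pow 2 r).div_const 2).fun_add
      ((((hasDerivAt_id' r).const_mul C).fun_pow p).div_const (p : ℝ))
  refine h.congr_deriv ?_
  rw [show C ^ p = C ^ (p - 1) * C by rw [← pow_succ, Nat.sub_add_cancel (by omega)]]
  field_simp
  ring

lemma deriv_mixture (hp : p ≠ 0) (r : ℝ) : deriv (mixture C p) r = r + C ^ p * r ^ (p - 1) :=
  (hasDerivAt_mixture hp r).deriv

lemma half_sq_le_mul_deriv_mixture_sub (hp : p ≠ 0) (hC : 0 ≤ C) {q : ℝ} (hq : 0 ≤ q) :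
    q ^ 2 / 2 ≤ q * deriv (mixture C p) q - mixture C p q := by
  have hpos : (1 : ℝ) ≤ p := by exact_mod_cast Nat.one_le_iff_ne_zero.mpr hp
  have hqp : q * (C ^ p * q ^ (p - 1)) = C ^ p * q ^ p := by
    rw [mul_left_comm, ← pow_succ', Nat.sub_add_cancel (by omega)]
  have : C ^ p * q ^ p / p ≤ C ^ p * q ^ p := div_le_self (by positivity) hpos
  rw [deriv_mixture hp, mixture, mul_pow, mul_add, hqp]
  nlinarith

lemma deriv_mixture_le_mul (hp : 3 ≤ p) (hC : 0 ≤ C) {q k : ℝ} (hq0 : 0 ≤ q) (hq1 : q ≤ 1)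
    (hk : 1 + C ^ p * q ≤ k) : deriv (mixture C p) q ≤ k * q := by
  have hqp : q ^ (p - 1) ≤ q ^ 2 := pow_le_pow_of_le_one hq0 hq1 (by omega)
  rw [deriv_mixture (by omega)]
  nlinarith [mul_le_mul_of_nonneg_left hqp (pow_nonneg hC p)]

end Mixture

lemma quadratic_margin {β k q s m : ℝ} (hm : q ^ 2 / 2 ≤ m) (hs0 : 0 ≤ s) (hsk : s ≤ k * q) :
    β ^ 2 / 4 * (1 - (β * k) ^ 2) * q ^ 2 ≤ β ^ 2 / 2 * m - β ^ 4 * s ^ 2 / 4 := by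
  have hs2 : s ^ 2 ≤ (k * q) ^ 2 := pow_le_pow_left₀ hs0 hsk 2
  nlinarith [mul_le_mul_of_nonneg_left hs2 (by positivity : (0 : ℝ) ≤ β ^ 4),
    mul_le_mul_of_nonneg_left hm (by positivity : (0 : ℝ) ≤ β ^ 2 / 2)]

/-- For `p ≥ 3`, `C > 0`, `0 < β < 1`, `ξ₀ r = r²/2 + (C r)^p/p` and the RS functional
`F_RS(q,β) = E[log cosh(β √(ξ₀'(q)) Z)] + (β²/2)(ξ₀(1) - ξ₀(q) - (1-q) ξ₀'(q))`,
there exist `ε ∈ (0,1)` and `c > 0` with `F_RS(q,β) ≥ F_RS(0,β) + c q²` for all `q ∈ [0,ε]`. -/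
theorem stmt_8 (p : ℕ) (hp : 3 ≤ p) (C β : ℝ) (hC : 0 < C) (hβ : 0 < β) (hβ1 : β < 1) :
    let ξ₀ : ℝ → ℝ := fun r => r ^ 2 / 2 + (C * r) ^ p / p
    let F : ℝ → ℝ := fun q =>
      (∫ x, Real.log (Real.cosh (β * Real.sqrt (deriv ξ₀ q) * x)) ∂(gaussianReal 0 1))
        + β ^ 2 / 2 * (ξ₀ 1 - ξ₀ q - (1 - q) * deriv ξ₀ q)
    ∃ ε ∈ Set.Ioo (0 : ℝ) 1, ∃ c > (0 : ℝ),
      ∀ q ∈ Set.Icc (0 : ℝ) ε, F 0 + c * q ^ 2 ≤ F q := by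
  intro ξ₀ F
  have hp0 : p ≠ 0 := by omega
  have hCp : 0 < C ^ p := pow_pos hC p
  obtain ⟨k, hβk, hk1⟩ : ∃ k, β * k = (1 + β) / 2 ∧ 1 < k :=
    ⟨(1 + β) / (2 * β), by field_simp, by rw [one_lt_div (by positivity)]; linarith⟩
  refine ⟨min (1 / 2) ((k - 1) / C ^ p), ⟨lt_min (by norm_num) (div_pos (by linarith) hCp),
    min_lt_of_left_lt (by norm_num)⟩, β ^ 2 / 4 * (1 - (β * k) ^ 2), ?_, ?_⟩
  · rw [hβk]
    exact mul_pos (by positivity)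
      (sub_pos.2 (pow_lt_one₀ (by positivity) (by linarith) two_ne_zero))
  rintro q ⟨hq0, hqε⟩
  have hslope : deriv (mixture C p) q ≤ k * q := by
    have hCq := (le_div_iff₀' hCp).1 (hqε.trans (min_le_right _ _))
    exact deriv_mixture_le_mul hp hC.le hq0 ((hqε.trans (min_le_left _ _)).trans (by norm_num))
      (by linarith)
  have hF := rsFunctional_sub_rsFunctional_zero_ge (ξ := mixture C p) β (q := q)
    (by simp [mixture, hp0])
    (by simp [deriv_mixture hp0, zero_pow (show p - 1 ≠ 0 by omega)])
    (by rw [deriv_mixture hp0]; positivity)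
  have hmargin := quadratic_margin (β := β) (half_sq_le_mul_deriv_mixture_sub hp0 hC.le hq0)
    (by rw [deriv_mixture hp0]; positivity) hslope
  show rsFunctional (mixture C p) β 0 + _ ≤ rsFunctional (mixture C p) β q
  linarith
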